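/- arXiv:2307.14282 — 5 statements merged into one kernel-verified Lean document; each statement's English description precedes it below -/
import Mathlib

section
/- Let Y be a real random variable, let A be an event with P(A) = δ > 0, and suppose the distribution of Y is continuous with quantile function F⁻¹. Then E[Y | A] ≥ E[Y | Y < F⁻¹(δ)] and E[Y | A] ≤ E[Y | Y > F⁻¹(1−δ)]. (Horowitz–Manski trimming bounds: the conditional mean of Y on an event of probability δ is bounded between the mean of the lower δ-tail and the mean of the upper δ-tail of Y.) -/
open MeasureTheory Set

/-- Conditional mean of `Y` on the event `A`. -/
noncomputable def condMean {Ω : Type*} [MeasurableSpace Ω] (μ : Measure Ω)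
    (Y : Ω → ℝ) (A : Set Ω) : ℝ :=
  (∫ ω in A, Y ω ∂μ) / (μ A).toReal

/-- Quantile function `F⁻¹(u) = inf {y : P(Y ≤ y) ≥ u}`. -/
noncomputable def quantileFn {Ω : Type*} [MeasurableSpace Ω] (μ : Measure Ω)
    (Y : Ω → ℝ) (u : ℝ) : ℝ :=
  sInf {y : ℝ | u ≤ (μ {ω | Y ω ≤ y}).toReal}

/-!
Since `Y` has no atoms, its distribution function `F` is continuous, so `F(F⁻¹(u)) = u` and both
tails `{Y < F⁻¹(δ)}` and `{Y > F⁻¹(1 - δ)}` have probability exactly `δ = P(A)`. For events `A`, `B`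
of equal measure, `∫_A Y - ∫_B Y = ∫_{A \ B} (Y - q) - ∫_{B \ A} (Y - q)` for every constant `q`;
with `q` the quantile cutting off the tail, both terms have a definite sign.
-/

open Filter Topology ProbabilityTheory

theorem Continuous.apply_sInf_setOf_le_eq {F : ℝ → ℝ} (hF : Continuous F)
    {a b u : ℝ} (hbot : Tendsto F atBot (𝓝 a)) (htop : Tendsto F atTop (𝓝 b))
    (hau : a < u) (hub : u < b) :
    F (sInf {y | u ≤ F y}) = u := by
  set S := {y | u ≤ F y}
  have hne : S.Nonempty := (htop.eventually (eventually_ge_nhds hub)).exists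
  have hbdd : BddBelow S := by
    obtain ⟨c, hc⟩ := eventually_atBot.1 (hbot.eventually (eventually_lt_nhds hau))
    exact ⟨c, fun y hy => le_of_not_gt fun hyc => (hc y hyc.le).not_ge hy⟩
  have hmem : sInf S ∈ S := (isClosed_le continuous_const hF).csInf_mem hne hbdd
  refine le_antisymm ?_ hmem
  have hbelow : ∀ y < sInf S, F y ≤ u := fun y hy =>
    le_of_lt (not_le.1 fun hyS => (csInf_le hbdd hyS).not_gt hy)
  exact le_of_tendsto (hF.continuousAt.tendsto.mono_left (nhdsWithin_le_nhds (s := Iio (sInf S))))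
    (eventually_nhdsWithin_of_forall hbelow)

section cdf

variable {ν : Measure ℝ} [IsProbabilityMeasure ν] [NullSingletonClass ν]

theorem leftLim_cdf (x : ℝ) : Function.leftLim (cdf ν) x = cdf ν x := by
  have hjump := (cdf ν).measure_singleton x
  rw [measure_cdf, measure_singleton, eq_comm, ENNReal.ofReal_eq_zero, sub_nonpos] at hjump
  exact le_antisymm ((monotone_cdf ν).leftLim_le le_rfl) hjump

theorem continuous_cdf : Continuous (cdf ν) :=
  continuous_iff_continuousAt.2 fun x => (monotone_cdf ν).continuousAt_iff_leftLim_eq_rightLim.2 <|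
    by rw [leftLim_cdf, StieltjesFunction.rightLim_eq]

theorem cdf_sInf_setOf_le_cdf {u : ℝ} (hu0 : 0 < u) (hu1 : u < 1) :
    cdf ν (sInf {y | u ≤ cdf ν y}) = u :=
  continuous_cdf.apply_sInf_setOf_le_eq (tendsto_cdf_atBot ν) (tendsto_cdf_atTop ν)
    hu0 hu1

end cdf

theorem nullSingletonClass_map {Ω : Type*} [MeasurableSpace Ω] {μ : Measure Ω} {Y : Ω → ℝ}
    (hY : Measurable Y) (hcont : ∀ y : ℝ, μ {ω | Y ω = y} = 0) : NullSingletonClass (μ.map Y) :=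
  ⟨fun y => by rw [Measure.map_apply hY (measurableSet_singleton y)]; exact hcont y⟩

section quantile

variable {Ω : Type*} [MeasurableSpace Ω] {μ : Measure Ω} [IsProbabilityMeasure μ] {Y : Ω → ℝ}

theorem quantileFn_eq_sInf_cdf_map (hY : Measurable Y) (u : ℝ) :
    quantileFn μ Y u = sInf {y | u ≤ cdf (μ.map Y) y} := by
  have := Measure.isProbabilityMeasure_map (μ := μ) hY.aemeasurable
  simp only [cdf_eq_real, measureReal_def, Measure.map_apply hY measurableSet_Iic]
  rfl

theorem measure_le_quantileFn (hY : Measurable Y) (hcont : ∀ y : ℝ, μ {ω | Y ω = y} = 0) {u : ℝ}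
    (hu0 : 0 < u) (hu1 : u < 1) : μ {ω | Y ω ≤ quantileFn μ Y u} = ENNReal.ofReal u := by
  have := Measure.isProbabilityMeasure_map (μ := μ) hY.aemeasurable
  have := nullSingletonClass_map hY hcont
  have hF := cdf_sInf_setOf_le_cdf (ν := μ.map Y) hu0 hu1
  rw [← quantileFn_eq_sInf_cdf_map hY] at hF
  calc μ {ω | Y ω ≤ quantileFn μ Y u} = μ.map Y (Iic (quantileFn μ Y u)) :=
        (Measure.map_apply hY measurableSet_Iic).symm
    _ = ENNReal.ofReal u := by rw [← ofReal_cdf, hF]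

theorem measure_lt_quantileFn (hY : Measurable Y) (hcont : ∀ y : ℝ, μ {ω | Y ω = y} = 0) {u : ℝ}
    (hu0 : 0 < u) (hu1 : u < 1) : μ {ω | Y ω < quantileFn μ Y u} = ENNReal.ofReal u := by
  have := nullSingletonClass_map hY hcont
  calc μ {ω | Y ω < quantileFn μ Y u} = μ.map Y (Iio (quantileFn μ Y u)) :=
        (Measure.map_apply hY measurableSet_Iio).symm
    _ = μ.map Y (Iic (quantileFn μ Y u)) := measure_congr Iio_ae_eq_Iic
    _ = μ {ω | Y ω ≤ quantileFn μ Y u} := Measure.map_apply hY measurableSet_Iic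
    _ = ENNReal.ofReal u := measure_le_quantileFn hY hcont hu0 hu1

theorem measure_quantileFn_lt (hY : Measurable Y) (hcont : ∀ y : ℝ, μ {ω | Y ω = y} = 0) {u : ℝ}
    (hu0 : 0 < u) (hu1 : u < 1) :
    μ {ω | quantileFn μ Y u < Y ω} = ENNReal.ofReal (1 - u) := by
  have hcompl : {ω | quantileFn μ Y u < Y ω} = {ω | Y ω ≤ quantileFn μ Y u}ᶜ := by
    ext ω; simp [not_le]
  rw [hcompl, prob_compl_eq_one_sub (measurableSet_le hY measurable_const),
    measure_le_quantileFn hY hcont hu0 hu1, ← ENNReal.ofReal_one, ← ENNReal.ofReal_sub _ hu0.le]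

end quantile

section integral

variable {Ω : Type*} [MeasurableSpace Ω] {μ : Measure Ω} {Y : Ω → ℝ} {A B : Set Ω}

theorem setIntegral_le_setIntegral_of_nonpos_of_nonneg_on_diff (hY : Integrable Y μ)
    (hA : MeasurableSet A) (hB : MeasurableSet B) (hAB : ∀ ω ∈ A \ B, Y ω ≤ 0)
    (hBA : ∀ ω ∈ B \ A, 0 ≤ Y ω) : ∫ ω in A, Y ω ∂μ ≤ ∫ ω in B, Y ω ∂μ := by
  have hsplitA := integral_inter_add_sdiff hB (hY.integrableOn (s := A))
  have hsplitB := integral_inter_add_sdiff hA (hY.integrableOn (s := B))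
  rw [inter_comm] at hsplitB
  linarith [setIntegral_nonpos (μ := μ) (hA.diff hB) hAB,
    setIntegral_nonneg (μ := μ) (hB.diff hA) hBA]

variable [IsFiniteMeasure μ]

theorem setIntegral_le_setIntegral_of_measure_eq (hY : Integrable Y μ) (hA : MeasurableSet A)
    (hB : MeasurableSet B) (hμ : μ A = μ B) {q : ℝ} (hAB : ∀ ω ∈ A \ B, Y ω ≤ q)
    (hBA : ∀ ω ∈ B \ A, q ≤ Y ω) : ∫ ω in A, Y ω ∂μ ≤ ∫ ω in B, Y ω ∂μ := by
  have hshift : ∫ ω in A, (Y ω - q) ∂μ ≤ ∫ ω in B, (Y ω - q) ∂μ :=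
    setIntegral_le_setIntegral_of_nonpos_of_nonneg_on_diff (hY.sub (integrable_const q)) hA hB
      (fun ω hω => sub_nonpos.2 (hAB ω hω)) (fun ω hω => sub_nonneg.2 (hBA ω hω))
  rwa [integral_sub hY.integrableOn (integrable_const q),
    integral_sub hY.integrableOn (integrable_const q), setIntegral_const, setIntegral_const,
    measureReal_def, measureReal_def, hμ, sub_le_sub_iff_right] at hshift

theorem condMean_le_condMean_of_measure_eq (hY : Integrable Y μ) (hA : MeasurableSet A)
    (hB : MeasurableSet B) (hμ : μ A = μ B) {q : ℝ} (hAB : ∀ ω ∈ A \ B, Y ω ≤ q)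
    (hBA : ∀ ω ∈ B \ A, q ≤ Y ω) : condMean μ Y A ≤ condMean μ Y B := by
  rw [condMean, condMean, hμ]
  exact div_le_div_of_nonneg_right (setIntegral_le_setIntegral_of_measure_eq hY hA hB hμ hAB hBA)
    ENNReal.toReal_nonneg

end integral

/-- Horowitz–Manski trimming bounds: for a continuously distributed integrable `Y`
and an event `A` of probability `δ ∈ (0,1)`, the conditional mean of `Y` on `A` lies
between the mean of the lower `δ`-tail and the mean of the upper `δ`-tail of `Y`. -/
theorem horowitz_manski_trimming_bounds
    {Ω : Type*} [MeasurableSpace Ω] (μ : Measure Ω) [IsProbabilityMeasure μ]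
    (Y : Ω → ℝ) (hYm : Measurable Y) (hYi : Integrable Y μ)
    (hcont : ∀ y : ℝ, μ {ω | Y ω = y} = 0)
    (A : Set Ω) (hA : MeasurableSet A)
    (δ : ℝ) (hδ0 : 0 < δ) (hδ1 : δ < 1)
    (hPA : μ A = ENNReal.ofReal δ) :
    condMean μ Y {ω | Y ω < quantileFn μ Y δ} ≤ condMean μ Y A ∧
      condMean μ Y A ≤ condMean μ Y {ω | quantileFn μ Y (1 - δ) < Y ω} := by
  have hlower : μ {ω | Y ω < quantileFn μ Y δ} = μ A := by
    rw [hPA, measure_lt_quantileFn hYm hcont hδ0 hδ1]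
  have hupper : μ A = μ {ω | quantileFn μ Y (1 - δ) < Y ω} := by
    rw [hPA, measure_quantileFn_lt hYm hcont (by linarith) (by linarith), sub_sub_cancel]
  exact ⟨condMean_le_condMean_of_measure_eq hYi (measurableSet_lt hYm measurable_const) hA hlower
      (fun ω hω => hω.1.le) (fun ω hω => not_lt.1 hω.2),
    condMean_le_condMean_of_measure_eq hYi hA (measurableSet_lt measurable_const hYm) hupper
      (fun ω hω => not_lt.1 hω.2) (fun ω hω => hω.1.le)⟩
end

section
/- Suppose Y is binary, A and B are events with B ⊆ A, P(A) > 0, and P(B)/P(A) ≥ δ̄ > 0. Then the conditional mean P(Y = 1 | B) lies in the interval [max{1 − P(Y=0 | A)/δ̄, 0}, min{P(Y=1 | A)/δ̄, 1}]. -/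
open MeasureTheory Set

/-- Binary outcome bounds under a subpopulation: if `Y ∈ {0,1}`, `B ⊆ A`,
`P(A) > 0` and `P(B)/P(A) ≥ δ̄ > 0`, then
`P(Y=1 | B) ∈ [max{1 − P(Y=0|A)/δ̄, 0}, min{P(Y=1|A)/δ̄, 1}]`. -/
theorem binary_subset_bounds
    {Ω : Type*} [MeasurableSpace Ω] (μ : Measure Ω) [IsProbabilityMeasure μ]
    (Y : Ω → ℝ) (hYm : Measurable Y) (hY01 : ∀ ω, Y ω = 0 ∨ Y ω = 1)
    (A B : Set Ω) (hAm : MeasurableSet A) (hBm : MeasurableSet B)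
    (hBA : B ⊆ A) (hA : 0 < μ A)
    (δbar : ℝ) (hδ0 : 0 < δbar) (hδ1 : δbar ≤ 1)
    (hratio : δbar ≤ (μ B).toReal / (μ A).toReal) :
    max (1 - (μ ({ω | Y ω = 0} ∩ A)).toReal / (μ A).toReal / δbar) 0 ≤
        (μ ({ω | Y ω = 1} ∩ B)).toReal / (μ B).toReal ∧
      (μ ({ω | Y ω = 1} ∩ B)).toReal / (μ B).toReal ≤
        min ((μ ({ω | Y ω = 1} ∩ A)).toReal / (μ A).toReal / δbar) 1 := by
  have h0m : MeasurableSet {ω | Y ω = 0} := hYm (measurableSet_singleton 0)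
  have h1m : MeasurableSet {ω | Y ω = 1} := hYm (measurableSet_singleton 1)
  set a := (μ A).toReal with ha_def
  set b := (μ B).toReal with hb_def
  have hμAfin : μ A ≠ ⊤ := measure_ne_top μ A
  have hμBfin : μ B ≠ ⊤ := measure_ne_top μ B
  have ha : 0 < a := ENNReal.toReal_pos hA.ne' hμAfin
  have hba : δbar * a ≤ b := (le_div_iff₀ ha).mp hratio
  have hb : 0 < b := lt_of_lt_of_le (by positivity) hba
  -- partition fact
  have hpart : ∀ S : Set Ω, MeasurableSet S →
      (μ ({ω | Y ω = 1} ∩ S)).toReal + (μ ({ω | Y ω = 0} ∩ S)).toReal = (μ S).toReal := by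
    intro S hS
    have hdisj : Disjoint ({ω | Y ω = 1} ∩ S) ({ω | Y ω = 0} ∩ S) := by
      refine Set.disjoint_left.mpr ?_
      rintro ω ⟨h1, _⟩ ⟨h0, _⟩
      simp only [mem_setOf_eq] at h1 h0
      norm_num [h0] at h1
    have hunion : ({ω | Y ω = 1} ∩ S) ∪ ({ω | Y ω = 0} ∩ S) = S := by
      ext ω
      constructor
      · rintro (⟨_, h⟩ | ⟨_, h⟩) <;> exact h
      · intro h
        rcases hY01 ω with h0 | h1
        · exact Or.inr ⟨h0, h⟩
        · exact Or.inl ⟨h1, h⟩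
    rw [← ENNReal.toReal_add (measure_ne_top _ _) (measure_ne_top _ _),
      ← measure_union hdisj (h0m.inter hS), hunion]
  have hmono1 : (μ ({ω | Y ω = 1} ∩ B)).toReal ≤ (μ ({ω | Y ω = 1} ∩ A)).toReal :=
    ENNReal.toReal_mono (measure_ne_top _ _)
      (measure_mono (inter_subset_inter_right _ hBA))
  have hmono0 : (μ ({ω | Y ω = 0} ∩ B)).toReal ≤ (μ ({ω | Y ω = 0} ∩ A)).toReal :=
    ENNReal.toReal_mono (measure_ne_top _ _)
      (measure_mono (inter_subset_inter_right _ hBA))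
  have hB0 : (μ ({ω | Y ω = 1} ∩ B)).toReal + (μ ({ω | Y ω = 0} ∩ B)).toReal = b :=
    hpart B hBm
  set x := (μ ({ω | Y ω = 1} ∩ B)).toReal with hx_def
  set q := (μ ({ω | Y ω = 0} ∩ B)).toReal with hq_def
  set p1 := (μ ({ω | Y ω = 1} ∩ A)).toReal with hp1_def
  set p0 := (μ ({ω | Y ω = 0} ∩ A)).toReal with hp0_def
  have hx0 : 0 ≤ x := ENNReal.toReal_nonneg
  have hp00 : 0 ≤ p0 := ENNReal.toReal_nonneg
  have hp10 : 0 ≤ p1 := ENNReal.toReal_nonneg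
  have hq0 : 0 ≤ q := ENNReal.toReal_nonneg
  have hδa : (0:ℝ) < δbar * a := by positivity
  constructor
  · rw [max_le_iff]
    refine ⟨?_, by positivity⟩
    have key : q / b ≤ p0 / (δbar * a) := div_le_div₀ hp00 hmono0 hδa hba
    have hxq : x / b = 1 - q / b := by field_simp; linarith
    rw [div_div, mul_comm a δbar]
    linarith
  · rw [le_min_iff]
    constructor
    · rw [div_div, mul_comm a δbar]
      exact div_le_div₀ hp10 hmono1 hδa hba
    · rw [div_le_one hb]
      linarith
end

section
/- Local preference set under cutoff characterization, right side of the cutoff: suppose a student's matching equals both her P-best and her Q-best option in her budget set B, where P is a weak partial order of Q, and suppose S_j ≥ c_j so that B = B⁺ (the right-counterfactual budget set). Let (a, b) be the pair (P-best of B⁺, P-best of B⁻) with B⁻ = B⁺ \ {j-tied schools}. Then the first coordinate of the true local preference pair (Q-best of B⁺, Q-best of B⁻) equals a, and the second coordinate is either b or some unlisted feasible school d ∈ B⁻ \ (P ∪ {0}); moreover, if a = b, the second coordinate equals b. -/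
open Set

/-- Local preference set under cutoff characterization, right side of the cutoff:
let `r` (the true preference `Q`) be a strict linear order on `J⁰ = J ∪ {o}`, `P` a weak
partial order of `Q` (a set of `Q`-acceptable schools, carrying the induced order), and
`Bm ⊆ Bp` the left/right counterfactual budget sets with `o ∈ Bm`. Let `a` and `b` be
the `P`-best elements of `Bp` and `Bm` (with the convention `= o` when the intersection
with `P` is empty), and `qp`, `qm` the `Q`-best elements of `Bp` and `Bm`. If the
realized budget set is `Bp` and the matching equals both the `P`-best and the `Q`-best
of `Bp` (i.e. `qp = a`), then the true local preference pair `(qp, qm)` has first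
coordinate `a`, second coordinate either `b` or an unlisted feasible school in
`Bm \ (P ∪ {o})`, and if `a = b` then the second coordinate equals `b`. -/
theorem local_preference_set_right
    {α : Type*} (r : α → α → Prop)
    [IsTrans α r] [IsTrichotomous α r] [IsIrrefl α r]
    (o : α) (P : Set α) (hoP : o ∉ P) (hacc : ∀ d ∈ P, r d o)
    (Bp Bm : Set α) (hsub : Bm ⊆ Bp) (hoBm : o ∈ Bm)
    (a b qp qm : α)
    (ha : (a ∈ Bp ∩ P ∧ ∀ n ∈ Bp ∩ P, a = n ∨ r a n) ∨ (Bp ∩ P = ∅ ∧ a = o))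
    (hb : (b ∈ Bm ∩ P ∧ ∀ n ∈ Bm ∩ P, b = n ∨ r b n) ∨ (Bm ∩ P = ∅ ∧ b = o))
    (hqp : qp ∈ Bp ∧ ∀ n ∈ Bp, qp = n ∨ r qp n)
    (hqm : qm ∈ Bm ∧ ∀ n ∈ Bm, qm = n ∨ r qm n)
    (hcc : qp = a) :
    qp = a ∧ (qm = b ∨ qm ∈ Bm \ insert o P) ∧ (a = b → qm = b) := by
  obtain ⟨hqpB, hqpbest⟩ := hqp
  obtain ⟨hqmB, hqmbest⟩ := hqm
  have asym : ∀ x y : α, r x y → r y x → False := fun x y h1 h2 =>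
    irrefl_of r x (Trans.trans h1 h2)
  have hbBm : b ∈ Bm := by
    rcases hb with ⟨⟨h1, _⟩, _⟩ | ⟨_, rfl⟩
    · exact h1
    · exact hoBm
  refine ⟨hcc, ?_, ?_⟩
  · by_cases hP : qm ∈ P
    · left
      rcases hb with ⟨⟨hbB, hbP⟩, hbbest⟩ | ⟨hemp, rfl⟩
      · rcases hbbest qm ⟨hqmB, hP⟩ with h | h
        · exact h.symm
        · rcases hqmbest b hbB with h2 | h2
          · exact h2
          · exact absurd h2 fun h2 => asym _ _ h h2
      · exact absurd (hemp ▸ (⟨hqmB, hP⟩ : qm ∈ Bm ∩ P)) (Set.notMem_empty qm)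
    · by_cases ho : qm = o
      · left
        rcases hb with ⟨⟨hbB, hbP⟩, _⟩ | ⟨_, rfl⟩
        · rcases hqmbest b hbB with h | h
          · exact absurd (h ▸ hP) (fun h' => h' hbP)
          · exact absurd (hacc b hbP) fun h2 => asym _ _ h (ho ▸ h2)
        · exact ho
      · right
        exact ⟨hqmB, fun h => h.elim ho hP⟩
  · intro hab
    have hqpb : qp = b := hcc.trans hab
    rcases hqmbest b hbBm with h | h
    · exact h
    · rcases hqpbest qm (hsub hqmB) with h2 | h2
      · exact h2.symm.trans hqpb
      · exact absurd h2 fun h2 => asym _ _ h (hqpb ▸ h2)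
end

section
/- Local preference set under cutoff characterization, left side of the cutoff: in the setting above, suppose instead S_j < c_j so that the realized budget set is B⁻, and the matching equals both the P-best and the Q-best of B⁻. Then the second coordinate of the true local preference pair equals b (the P-best of B⁻), and the first coordinate is either a (the P-best of B⁺) or some school in (B⁺ \ B⁻) \ (P ∪ {0}); in particular, no school in B⁻ \ (P ∪ {0}) can be the Q-best of B⁺. -/
open Set

/-- Local preference set under cutoff characterization, left side of the cutoff: in the
same setting as on the right side (strict linear order `r` for the true preference `Q`,
weak partial order `P` of `Q`, nested counterfactual budget sets `Bm ⊆ Bp` with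
`o ∈ Bm`), suppose the realized budget set is `Bm` and the matching equals both the
`P`-best and the `Q`-best of `Bm` (i.e. `qm = b`). Then the second coordinate of the
true local preference pair equals `b`, the first coordinate `qp` is either `a` (the
`P`-best of `Bp`) or some school in `(Bp \ Bm) \ (P ∪ {o})`, and no school in
`Bm \ (P ∪ {o})` can be the `Q`-best of `Bp`. -/
theorem local_preference_set_left
    {α : Type*} (r : α → α → Prop)
    [IsTrans α r] [IsTrichotomous α r] [IsIrrefl α r]
    (o : α) (P : Set α) (hoP : o ∉ P) (hacc : ∀ d ∈ P, r d o)
    (Bp Bm : Set α) (hsub : Bm ⊆ Bp) (hoBm : o ∈ Bm)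
    (a b qp qm : α)
    (ha : (a ∈ Bp ∩ P ∧ ∀ n ∈ Bp ∩ P, a = n ∨ r a n) ∨ (Bp ∩ P = ∅ ∧ a = o))
    (hb : (b ∈ Bm ∩ P ∧ ∀ n ∈ Bm ∩ P, b = n ∨ r b n) ∨ (Bm ∩ P = ∅ ∧ b = o))
    (hqp : qp ∈ Bp ∧ ∀ n ∈ Bp, qp = n ∨ r qp n)
    (hqm : qm ∈ Bm ∧ ∀ n ∈ Bm, qm = n ∨ r qm n)
    (hcc : qm = b) :
    qm = b ∧ (qp = a ∨ qp ∈ (Bp \ Bm) \ insert o P) ∧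
      (∀ d ∈ Bm, d ∉ insert o P → qp ≠ d) := by
  subst hcc
  have asym : ∀ x y : α, r x y → r y x → False := fun x y h1 h2 =>
    (irrefl_of r x) (trans_of r h1 h2)
  -- if qp ∈ Bm then qp = qm
  have hmem : qp ∈ Bm → qp = qm := by
    intro h
    rcases hqm.2 qp h with h1 | h1
    · exact h1.symm
    rcases hqp.2 qm (hsub hqm.1) with h2 | h2
    · exact h2
    · exact absurd h1 (fun h1 => asym _ _ h1 h2)
  -- if qp ∈ insert o P then qp = a
  have hins : qp ∈ insert o P → qp = a := by
    intro h
    rcases h with h | h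
    · -- qp = o : then Bp ∩ P = ∅, since any p ∈ Bp ∩ P has r p o beating qp
      rcases ha with ⟨⟨haBp, haP⟩, _⟩ | ⟨_, hao⟩
      · exfalso
        rcases hqp.2 a haBp with h2 | h2
        · exact hoP (h ▸ h2 ▸ haP)
        · exact asym _ _ (hacc a haP) (h ▸ h2)
      · rw [h, hao]
    · -- qp ∈ P, so qp ∈ Bp ∩ P, and a is P-best
      rcases ha with ⟨⟨haBp, _⟩, hbest⟩ | ⟨hempty, _⟩
      · rcases hbest qp ⟨hqp.1, h⟩ with h1 | h1
        · exact h1.symm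
        rcases hqp.2 a haBp with h2 | h2
        · exact h2
        · exact absurd h1 (fun h1 => asym _ _ h1 h2)
      · exact absurd (hempty ▸ (⟨hqp.1, h⟩ : qp ∈ Bp ∩ P)) (Set.notMem_empty qp)
  have hqmins : qm ∈ insert o P := by
    rcases hb with ⟨⟨_, hP⟩, _⟩ | ⟨_, hbo⟩
    · exact Set.mem_insert_of_mem o hP
    · rw [hbo]; exact Set.mem_insert o P
  refine ⟨rfl, ?_, ?_⟩
  · by_cases hBm : qp ∈ Bm
    · left
      exact hins (hmem hBm ▸ hqmins)
    · by_cases hi : qp ∈ insert o P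
      · left; exact hins hi
      · right; exact ⟨⟨hqp.1, hBm⟩, hi⟩
  · intro d hdBm hdni hqd
    exact hdni (hqd ▸ hmem (hqd ▸ hdBm) ▸ hqmins)
end

section
/- UMAS exclusion implies revealed preference: consider an expected-utility maximizer with distinct utilities U_0 = 0 < ... over schools, who chooses a ranked list P of at most K schools to maximize Σ_u U_{P^u} L^P_u, where L^P_u is the probability that P^u is the lowest-indexed listed school whose cutoff the agent's score clears. Suppose schools d, e satisfy: the event {agent clears cutoff of d} is contained in {agent clears cutoff of e}, and swapping e for d in any list strictly changes at least one assignment probability whenever d is listed after position n with n < |P|, or changes L^P_n or L^P_0 when n = |P|. If the optimal list P contains d but not e, then U_d > U_e. -/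
open MeasureTheory Set

/-- The event that the agent's score at school `j` clears the (random) cutoff. -/
def clearSet {Ω J : Type*} (C : J → Ω → ℝ) (s : J → ℝ) (j : J) : Set Ω :=
  {ω | C j ω ≤ s j}

/-- `L^P_u` for `u ≥ 1` (here 0-indexed): the probability that the school in position
`u` of the list `p` is the lowest-ranked listed school whose cutoff the agent clears. -/
noncomputable def assignProb {Ω J : Type*} [MeasurableSpace Ω] (μ : Measure Ω)
    (C : J → Ω → ℝ) (s : J → ℝ) (d₀ : J) (p : List J) (u : ℕ) : ℝ :=
  (μ ((⋂ v ∈ Finset.range u, (clearSet C s (p.getD v d₀))ᶜ) ∩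
      clearSet C s (p.getD u d₀))).toReal

/-- `L^P_0`: the probability of remaining unassigned (taking the outside option). -/
noncomputable def outsideProb {Ω J : Type*} [MeasurableSpace Ω] (μ : Measure Ω)
    (C : J → Ω → ℝ) (s : J → ℝ) (d₀ : J) (p : List J) : ℝ :=
  (μ (⋂ v ∈ Finset.range p.length, (clearSet C s (p.getD v d₀))ᶜ)).toReal

/-- Expected utility of submitting the ranked list `p` (the outside option has
utility `0`). -/
noncomputable def expUtil {Ω J : Type*} [MeasurableSpace Ω] (μ : Measure Ω)
    (C : J → Ω → ℝ) (s : J → ℝ) (d₀ : J) (U : J → ℝ) (p : List J) : ℝ :=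
  ∑ u ∈ Finset.range p.length, U (p.getD u d₀) * assignProb μ C s d₀ p u

/-! Swap `e` for `d` at `d`'s position `n` in `P`. Since clearing `d` implies clearing `e`
almost surely, the swap leaves the assignment probabilities before `n` unchanged and only moves
probability mass from later positions and from the outside option to position `n`. If `U e ≥ U d`
this cannot lower the expected utility, and the gain is at least
`∑_{u > n} (U d - U_u) · (mass lost at u) + U d · (outside mass lost)`, which the relevance
condition makes strictly positive, contradicting the optimality of `P`. -/

theorem List.getD_map_ite_eq_update {α : Type*} [DecidableEq α] {l : List α} (hl : l.Nodup)
    {a : α} (ha : a ∈ l) (b d₀ : α) (u : ℕ) :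
    (l.map fun x => if x = a then b else x).getD u d₀ =
      Function.update (fun v => l.getD v d₀) (l.idxOf a) b u := by
  have hidx : l.idxOf a < l.length := List.idxOf_lt_length_iff.mpr ha
  by_cases hu : u < l.length
  · have hiff : l[u] = a ↔ u = l.idxOf a := by
      constructor
      · rintro rfl; exact (hl.idxOf_getElem u hu).symm
      · rintro rfl; exact List.getElem_idxOf hidx
    rw [List.getD_eq_getElem _ _ (by simpa using hu), Function.update_apply,
      List.getD_eq_getElem _ _ hu, List.getElem_map]
    simp only [hiff]
  · rw [List.getD_eq_default _ _ (by simpa using hu), Function.update_of_ne (by omega),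
      List.getD_eq_default _ _ (by omega)]

theorem List.Nodup.map_ite_eq {α : Type*} [DecidableEq α] {l : List α} (hl : l.Nodup)
    {a b : α} (hb : b ∉ l) : (l.map fun x => if x = a then b else x).Nodup := by
  refine hl.map_on fun x hx y hy hxy => ?_
  split_ifs at hxy with hxa hya hya
  · rw [hxa, hya]
  · exact absurd (hxy ▸ hy) hb
  · exact absurd (hxy ▸ hx) hb
  · exact hxy

-- `assignProb` and `outsideProb` are by definition the measures of `firstHit` and `noneBefore`
-- of the clearing events `fun v => clearSet C s (p.getD v d₀)`.
section FirstHit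

variable {Ω : Type*}

def noneBefore (g : ℕ → Set Ω) (k : ℕ) : Set Ω :=
  ⋂ v ∈ Finset.range k, (g v)ᶜ

def firstHit (g : ℕ → Set Ω) (u : ℕ) : Set Ω :=
  noneBefore g u ∩ g u

theorem noneBefore_succ (g : ℕ → Set Ω) (k : ℕ) :
    noneBefore g (k + 1) = noneBefore g k \ g k := by
  ext ω
  simp only [noneBefore, Finset.range_add_one, Finset.mem_insert, Set.mem_iInter,
    Set.mem_sdiff, Set.mem_compl_iff, forall_eq_or_imp]
  exact and_comm

theorem noneBefore_congr {g g' : ℕ → Set Ω} {n k : ℕ} (h : ∀ v ≠ n, g' v = g v) (hk : k ≤ n) :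
    noneBefore g' k = noneBefore g k :=
  Set.iInter₂_congr fun v hv => by rw [h v (by simp at hv; omega)]

theorem firstHit_congr {g g' : ℕ → Set Ω} {n u : ℕ} (h : ∀ v ≠ n, g' v = g v) (hu : u < n) :
    firstHit g' u = firstHit g u := by
  rw [firstHit, firstHit, noneBefore_congr h hu.le, h u hu.ne]

theorem noneBefore_diff_subset {g g' : ℕ → Set Ω} {n : ℕ} (h : ∀ v ≠ n, g' v = g v) (k : ℕ) :
    noneBefore g' k \ noneBefore g k ⊆ g n \ g' n := by
  rintro ω ⟨hω', hω⟩
  simp only [noneBefore, Set.mem_iInter, Set.mem_compl_iff, not_forall, not_not] at hω' hω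
  obtain ⟨v, hv, hωv⟩ := hω
  obtain rfl : v = n := by
    by_contra hvn
    exact hω' v hv (h v hvn ▸ hωv)
  exact ⟨hωv, hω' v hv⟩

theorem firstHit_diff_subset {g g' : ℕ → Set Ω} {n u : ℕ} (h : ∀ v ≠ n, g' v = g v)
    (hu : u ≠ n) : firstHit g' u \ firstHit g u ⊆ g n \ g' n := by
  rintro ω ⟨⟨hω', hωu⟩, hω⟩
  refine noneBefore_diff_subset h u ⟨hω', fun hω₀ => hω ⟨hω₀, ?_⟩⟩
  rwa [← h u hu]

variable [MeasurableSpace Ω] (μ : Measure Ω)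

theorem sum_measure_firstHit_add_measure_noneBefore {g : ℕ → Set Ω}
    (hg : ∀ u, MeasurableSet (g u)) (k : ℕ) :
    ∑ u ∈ Finset.range k, μ (firstHit g u) + μ (noneBefore g k) = μ Set.univ := by
  induction k with
  | zero => simp [noneBefore]
  | succ k ih =>
    rw [Finset.sum_range_succ, noneBefore_succ, add_assoc, firstHit,
      measure_inter_add_sdiff _ (hg k), ih]

theorem sum_toReal_measure_firstHit_add [IsFiniteMeasure μ] {g : ℕ → Set Ω}
    (hg : ∀ u, MeasurableSet (g u)) (k : ℕ) :
    ∑ u ∈ Finset.range k, (μ (firstHit g u)).toReal + (μ (noneBefore g k)).toReal =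
      (μ Set.univ).toReal := by
  rw [← sum_measure_firstHit_add_measure_noneBefore μ hg k,
    ENNReal.toReal_add (ENNReal.sum_ne_top.mpr fun _ _ => measure_ne_top μ _)
      (measure_ne_top μ _),
    ENNReal.toReal_sum fun _ _ => measure_ne_top μ _]

theorem toReal_measure_le_of_diff_null [IsFiniteMeasure μ] {A B : Set Ω}
    (h : μ (A \ B) = 0) : (μ A).toReal ≤ (μ B).toReal :=
  ENNReal.toReal_mono (measure_ne_top μ B) (measure_mono_ae (ae_le_set.mpr h))

end FirstHit

section Reallocation

variable {L n : ℕ} {w a a' : ℕ → ℝ}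

theorem mul_sub_nonneg_of_reallocation (hw : ∀ u, n < u → u < L → w u < w n)
    (hbefore : ∀ u < n, a' u = a u) (hafter : ∀ u, n < u → u < L → a' u ≤ a u)
    {u : ℕ} (hu : u < L) : 0 ≤ (w n - w u) * (a u - a' u) := by
  rcases lt_trichotomy u n with hun | rfl | hnu
  · simp [hbefore u hun]
  · simp
  · exact mul_nonneg (sub_nonneg.mpr (hw u hnu hu).le) (sub_nonneg.mpr (hafter u hnu hu))

theorem sum_update_mul (x : ℝ) (hn : n < L) :
    ∑ u ∈ Finset.range L, Function.update w n x u * a' u =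
      ∑ u ∈ Finset.range L, w u * a' u + (x - w n) * a' n := by
  have hsplit : ∀ u, Function.update w n x u * a' u =
      w u * a' u + if u = n then (x - w n) * a' n else 0 := by
    intro u
    rcases eq_or_ne u n with rfl | hun
    · rw [Function.update_self, if_pos rfl]; ring
    · rw [Function.update_of_ne hun, if_neg hun, add_zero]
  simp only [hsplit, Finset.sum_add_distrib, Finset.sum_ite_eq', Finset.mem_range, hn, if_true]

theorem lt_of_sum_update_mul_le (hn : n < L) (hw : ∀ u, n < u → u < L → w u < w n)
    (hwn : 0 < w n) (ha'n : 0 ≤ a' n)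
    (hbefore : ∀ u < n, a' u = a u) (hafter : ∀ u, n < u → u < L → a' u ≤ a u)
    {o o' x : ℝ} (ho : o' ≤ o)
    (htotal : ∑ u ∈ Finset.range L, a u + o = ∑ u ∈ Finset.range L, a' u + o')
    (hne : (∃ u < L, a u ≠ a' u) ∨ o ≠ o')
    (hle : ∑ u ∈ Finset.range L, Function.update w n x u * a' u ≤
      ∑ u ∈ Finset.range L, w u * a u) :
    x < w n := by
  by_contra! hx
  set S := ∑ u ∈ Finset.range L, (w n - w u) * (a u - a' u)
  have hterm : ∀ u ∈ Finset.range L, 0 ≤ (w n - w u) * (a u - a' u) := fun u hu =>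
    mul_sub_nonneg_of_reallocation hw hbefore hafter (Finset.mem_range.mp hu)
  -- the gain `∑ update w n x * a' - ∑ w * a` equals `S + w n * (o - o') + (x - w n) * a' n`
  have hS : S = w n * (o' - o) + ∑ u ∈ Finset.range L, w u * a' u -
      ∑ u ∈ Finset.range L, w u * a u := by
    simp only [S, sub_mul, mul_sub, Finset.sum_sub_distrib, ← Finset.mul_sum]
    linear_combination w n * htotal
  rw [sum_update_mul x hn] at hle
  have hS0 : S = 0 := le_antisymm (by nlinarith) (Finset.sum_nonneg hterm)
  have hoo : o = o' := le_antisymm (by nlinarith) ho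
  have hoff : ∀ u < L, u ≠ n → a u = a' u := by
    intro u hu hun
    rcases hun.lt_or_gt with hun | hnu
    · exact (hbefore u hun).symm
    · have h0 := (Finset.sum_eq_zero_iff_of_nonneg hterm).mp hS0 u (Finset.mem_range.mpr hu)
      simpa [sub_eq_zero, (hw u hnu hu).ne'] using h0
  have hat : a n = a' n := by
    have hsum : ∑ u ∈ Finset.range L, (a u - a' u) = a n - a' n :=
      Finset.sum_eq_single n (fun u hu hun => sub_eq_zero.mpr (hoff u (by simpa using hu) hun))
        (by simp [hn])
    rw [Finset.sum_sub_distrib] at hsum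
    linarith
  rcases hne with ⟨u, hu, hne⟩ | hne
  · exact hne (if hun : u = n then hun ▸ hat else hoff u hu hun)
  · exact hne hoo

end Reallocation

/-- UMAS exclusion implies revealed preference: an expected-utility maximizer with
distinct positive decreasing utilities along her optimal list `P` of at most `K`
schools, who lists `d` but not `e`, must prefer `d` to `e` (`U_d > U_e`) whenever
(i) clearing the cutoff of `d` almost surely implies clearing that of `e`, and
(ii) replacing `d` by `e` changes at least one assignment probability. -/
theorem umas_exclusion_revealed_preference
    {Ω J : Type*} [MeasurableSpace Ω] [DecidableEq J]
    (μ : Measure Ω) [IsProbabilityMeasure μ]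
    (C : J → Ω → ℝ) (s : J → ℝ) (d₀ : J)
    (hmeas : ∀ j : J, MeasurableSet (clearSet C s j))
    (U : J → ℝ) (K : ℕ)
    (P : List J) (hPnd : P.Nodup) (hPne : P ≠ []) (hPK : P.length ≤ K)
    -- utilities along the list are strictly decreasing and positive
    (hUdec : ∀ u v : ℕ, u < v → v < P.length → U (P.getD v d₀) < U (P.getD u d₀))
    (hUpos : ∀ u : ℕ, u < P.length → 0 < U (P.getD u d₀))
    -- optimality of P among all feasible ranked lists
    (hopt : ∀ p : List J, p.Nodup → p ≠ [] → p.length ≤ K →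
      expUtil μ C s d₀ U p ≤ expUtil μ C s d₀ U P)
    (d e : J) (hd : d ∈ P) (he : e ∉ P)
    -- almost-sure containment: clearing d's cutoff implies clearing e's
    (hcontain : μ (clearSet C s d \ clearSet C s e) = 0)
    -- relevance: swapping e for d changes at least one assignment probability
    (hrel :
      (∃ u : ℕ, u < P.length ∧
          assignProb μ C s d₀ P u ≠
            assignProb μ C s d₀ (P.map fun x => if x = d then e else x) u) ∨
        outsideProb μ C s d₀ P ≠
          outsideProb μ C s d₀ (P.map fun x => if x = d then e else x)) :
    U e < U d := by
  set Q := P.map fun x => if x = d then e else x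
  set n := P.idxOf d
  have hn : n < P.length := List.idxOf_lt_length_iff.mpr hd
  have hPn : P.getD n d₀ = d := by rw [List.getD_eq_getElem _ _ hn]; exact List.getElem_idxOf hn
  have hQ : ∀ u, Q.getD u d₀ = Function.update (fun v => P.getD v d₀) n e u :=
    List.getD_map_ite_eq_update hPnd hd e d₀
  have hQlen : Q.length = P.length := List.length_map _
  set g := fun v => clearSet C s (P.getD v d₀)
  set g' := fun v => clearSet C s (Q.getD v d₀)
  have hg' : ∀ v ≠ n, g' v = g v := fun v hv => by
    simp only [g, g', hQ, Function.update_of_ne hv]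
  have hnull : μ (g n \ g' n) = 0 := by
    simpa only [g, g', hQ, Function.update_self, hPn] using hcontain
  have htotal : ∑ u ∈ Finset.range P.length, assignProb μ C s d₀ P u + outsideProb μ C s d₀ P =
      ∑ u ∈ Finset.range P.length, assignProb μ C s d₀ Q u + outsideProb μ C s d₀ Q := by
    have hP := sum_toReal_measure_firstHit_add μ (g := g) (fun _ => hmeas _) P.length
    have hQ' := sum_toReal_measure_firstHit_add μ (g := g') (fun _ => hmeas _) Q.length
    rw [outsideProb, outsideProb, hQlen]
    exact hP.trans (hQlen ▸ hQ').symm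
  have houtside : outsideProb μ C s d₀ Q ≤ outsideProb μ C s d₀ P := by
    rw [outsideProb, outsideProb, hQlen]
    exact toReal_measure_le_of_diff_null μ (measure_mono_null (noneBefore_diff_subset hg' _) hnull)
  have hQopt : expUtil μ C s d₀ U Q ≤ expUtil μ C s d₀ U P :=
    hopt Q (hPnd.map_ite_eq he) (by simpa [Q] using hPne) (hQlen ▸ hPK)
  rw [expUtil, hQlen] at hQopt
  simp only [hQ, ← Function.comp_apply (f := U), Function.comp_update] at hQopt
  rw [← hPn]
  exact lt_of_sum_update_mul_le hn (fun u hnu hu => hUdec n u hnu hu) (hUpos n hn)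
    ENNReal.toReal_nonneg
    (fun u hu => congrArg _ (congrArg μ (firstHit_congr hg' hu)))
    (fun u hnu _ => toReal_measure_le_of_diff_null μ
      (measure_mono_null (firstHit_diff_subset hg' hnu.ne') hnull))
    houtside htotal hrel hQopt
end
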